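/- For every function f assigning to each link of the blob gadget link structure one of the link's two vertices, if every vertex is selected by at most 2 links, then the vertex s is selected by at least one link. (This is the combinatorial core of Lemma 1: in any degree-2 edge partition of a blob gadget there is at least one red edge incident to s.) -/
import Mathlib


/-- The 14 vertices of the blob gadget: `s`, `t`, `u 0, …, u 5` (representing
`u_1, …, u_6`) and `v 0, …, v 5` (representing `v_1, …, v_6`). -/
inductive BlobV where
  | s : BlobV
  | t : BlobV
  | u : Fin 6 → BlobV
  | v : Fin 6 → BlobV
deriving DecidableEq

/-- The 27 links of the blob gadget: `{s, v_i}`, `{t, u_i}`, `{u_i, v_i}` for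
`i = 1, …, 6` (here `0`-indexed), together with `{u_j, u_{j+1}}`,
`{v_j, v_{j+1}}`, `{u_j, v_{j+1}}` for `j = 1, 3, 5` (here `j = 0, 2, 4`). -/
def blobLinks : Set (Sym2 BlobV) :=
  {l | (∃ i : Fin 6, l = s(BlobV.s, BlobV.v i) ∨ l = s(BlobV.t, BlobV.u i) ∨
          l = s(BlobV.u i, BlobV.v i)) ∨
    l = s(BlobV.u 0, BlobV.u 1) ∨ l = s(BlobV.u 2, BlobV.u 3) ∨
    l = s(BlobV.u 4, BlobV.u 5) ∨
    l = s(BlobV.v 0, BlobV.v 1) ∨ l = s(BlobV.v 2, BlobV.v 3) ∨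
    l = s(BlobV.v 4, BlobV.v 5) ∨
    l = s(BlobV.u 0, BlobV.v 1) ∨ l = s(BlobV.u 2, BlobV.v 3) ∨
    l = s(BlobV.u 4, BlobV.v 5)}

deriving instance Fintype for BlobV

instance : DecidablePred (· ∈ blobLinks) := fun l => by
  unfold blobLinks
  exact Set.decidableSetOf l _

/-- The links as a finset. -/
def blobLinksF : Finset (Sym2 BlobV) := Finset.univ.filter (· ∈ blobLinks)

lemma mem_blobLinksF {l : Sym2 BlobV} : l ∈ blobLinksF ↔ l ∈ blobLinks := by
  simp [blobLinksF]

lemma blobLinksF_card : blobLinksF.card = 27 := by decide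

/-- combinatorial core of Lemma 1: for every function `f`
assigning to each link of the blob gadget one of the link's two vertices, if
every vertex is selected by at most 2 links, then the vertex `s` is selected
by at least one link. -/
theorem blob_selects_s (f : Sym2 BlobV → BlobV)
    (hf : ∀ l ∈ blobLinks, f l ∈ l)
    (hcap : ∀ x : BlobV, Set.ncard {l | l ∈ blobLinks ∧ f l = x} ≤ 2) :
    ∃ l ∈ blobLinks, f l = BlobV.s := by
  by_contra h
  push_neg at h
  -- fibers have card ≤ 2
  have hfib : ∀ x : BlobV, (blobLinksF.filter (fun l => f l = x)).card ≤ 2 := by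
    intro x
    have hset : {l | l ∈ blobLinks ∧ f l = x} =
        ↑(blobLinksF.filter (fun l => f l = x)) := by
      ext l
      simp [mem_blobLinksF, Finset.mem_filter, blobLinksF]
    have := hcap x
    rwa [hset, Set.ncard_coe_finset] at this
  have hmap : ∀ l ∈ blobLinksF, f l ∈ (Finset.univ.erase BlobV.s) := by
    intro l hl
    exact Finset.mem_erase.2 ⟨h l (mem_blobLinksF.1 hl), Finset.mem_univ _⟩
  have hcard := Finset.card_eq_sum_card_fiberwise hmap
  have hsum : ∑ x ∈ (Finset.univ.erase BlobV.s),
      (blobLinksF.filter (fun l => f l = x)).card ≤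
      ∑ _x ∈ (Finset.univ.erase BlobV.s), 2 :=
    Finset.sum_le_sum (fun x _ => hfib x)
  rw [Finset.sum_const, smul_eq_mul] at hsum
  rw [blobLinksF_card] at hcard
  have hce : (Finset.univ.erase BlobV.s).card = 13 := by decide
  rw [hce] at hsum
  omega
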